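/- For all natural numbers i, j, k₂ and real k₁, b_{i,j,k₁+k₂} = Σ_{r=0}^{k₂} C(k₂,r) · b_{i,j+r,k₁}. -/

import Mathlib

open Finset

noncomputable def msn (i j : ℕ) (k : ℝ) : ℝ :=
  ∑ r ∈ Finset.range (j + 1), (j.choose r : ℝ) * (-1 : ℝ) ^ (j - r) * ((r : ℝ) + k) ^ i

/-!
`msn i j k` is the `j`-th forward difference of `x ↦ x ^ i` at `k`, so the identity is the
Gregory–Newton formula for the shift by `k₂` applied to `Δ^[j] (x ↦ x ^ i)`, using
`Δ^[r] ∘ Δ^[j] = Δ^[j + r]`.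
-/

open fwdDiff

theorem fwdDiff_iter_shift_eq_sum {M G : Type*} [AddCommMonoid M] [AddCommGroup G] (h : M)
    (f : M → G) (j n : ℕ) (y : M) :
    (Δ_[h])^[j] f (y + n • h) = ∑ r ∈ range (n + 1), n.choose r • (Δ_[h])^[j + r] f y := by
  rw [shift_eq_sum_fwdDiff_iter h ((Δ_[h])^[j] f)]
  simp only [add_comm j, Function.iterate_add_apply]

lemma msn_eq_fwdDiff_iter (i j : ℕ) (k : ℝ) :
    msn i j k = (Δ_[1])^[j] (fun x : ℝ ↦ x ^ i) k := by
  rw [fwdDiff_iter_eq_sum_shift]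
  refine sum_congr rfl fun r _ ↦ ?_
  simp only [zsmul_eq_mul, Int.cast_mul, Int.cast_pow, Int.cast_neg, Int.cast_one,
    Int.cast_natCast, nsmul_eq_mul, mul_one]
  ring

theorem stmt (i j k₂ : ℕ) (k₁ : ℝ) : msn i j (k₁ + k₂) = ∑ r ∈ Finset.range (k₂ + 1), (k₂.choose r : ℝ) * msn i (j + r) k₁ := by
  have hshift : k₁ + (k₂ : ℝ) = k₁ + k₂ • (1 : ℝ) := by rw [nsmul_one]
  rw [msn_eq_fwdDiff_iter, hshift, fwdDiff_iter_shift_eq_sum]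
  simp only [msn_eq_fwdDiff_iter, nsmul_eq_mul]
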